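/- If the phases of A and B are both sufficiently small in magnitude, then I + AB is nonsingular: let α₁ ≤ β₁ and α₂ ≤ β₂ be reals with β₁ − α₁ < π, β₂ − α₂ < π, β₁ + β₂ < π, and α₁ + α₂ > −π, and let A, B ∈ Matrix (Fin n) (Fin n) ℂ satisfy star x ⬝ᵥ A.mulVec x ∈ S[α₁,β₁] and star x ⬝ᵥ B.mulVec x ∈ S[α₂,β₂] for every unit vector x ∈ EuclideanSpace ℂ (Fin n). Then det(1 + A * B) ≠ 0. -/

import Mathlib

open Matrix
open scoped Real

/-- The sector of complex numbers with phase in `[α, β]`. -/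
def sector (α β : ℝ) : Set ℂ :=
  {z : ℂ | ∃ r > (0 : ℝ), ∃ θ ∈ Set.Icc α β, z = (r : ℂ) * Complex.exp ((θ : ℂ) * Complex.I)}

/-!
Suppose `(1 + A * B) x = 0` with `x ≠ 0`, and put `y = B x`, so that `A y = -x`. Then
`a = ⟪y, A y⟫ = -⟪y, x⟫` and `b = ⟪x, B x⟫ = ⟪x, y⟫` satisfy `a * b = -‖b‖ ^ 2`, a non-positive
real number. But phases add under multiplication, so `a * b` lies in the sector
`S[α₁ + α₂, β₁ + β₂]`, which avoids the closed negative real axis since `-π < α₁ + α₂` and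
`β₁ + β₂ < π`.
-/

lemma ofReal_mul_mem_sector {α β c : ℝ} {z : ℂ} (hc : 0 < c) (hz : z ∈ sector α β) :
    (c : ℂ) * z ∈ sector α β := by
  obtain ⟨r, hr, θ, hθ, rfl⟩ := hz
  exact ⟨c * r, mul_pos hc hr, θ, hθ, by push_cast; ring⟩

lemma mul_mem_sector {α₁ β₁ α₂ β₂ : ℝ} {a b : ℂ} (ha : a ∈ sector α₁ β₁) (hb : b ∈ sector α₂ β₂) :
    a * b ∈ sector (α₁ + α₂) (β₁ + β₂) := by
  obtain ⟨r₁, hr₁, θ₁, hθ₁, rfl⟩ := ha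
  obtain ⟨r₂, hr₂, θ₂, hθ₂, rfl⟩ := hb
  refine ⟨r₁ * r₂, mul_pos hr₁ hr₂, θ₁ + θ₂,
    ⟨by linarith [hθ₁.1, hθ₂.1], by linarith [hθ₁.2, hθ₂.2]⟩, ?_⟩
  push_cast
  rw [add_mul, Complex.exp_add]
  ring

lemma sector_subset_slitPlane {α β : ℝ} (hα : -π < α) (hβ : β < π) :
    sector α β ⊆ Complex.slitPlane := by
  rintro _ ⟨r, hr, θ, hθ, rfl⟩
  have hθ' : θ ∈ Set.Ioc (-π) π := ⟨by linarith [hθ.1], by linarith [hθ.2]⟩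
  have harg : Complex.arg (r * Complex.exp (θ * Complex.I)) = θ := by
    rw [Complex.exp_mul_I, Complex.arg_mul_cos_add_sin_mul_I hr hθ']
  refine Complex.mem_slitPlane_iff_arg.2 ⟨harg ▸ hβ.trans_le' hθ.2 |>.ne, ?_⟩
  exact mul_ne_zero (Complex.ofReal_ne_zero.2 hr.ne') (Complex.exp_ne_zero _)

lemma dotProduct_mulVec_mem_sector {n : ℕ} {α β : ℝ} {C : Matrix (Fin n) (Fin n) ℂ}
    (hC : ∀ x : EuclideanSpace ℂ (Fin n), ‖x‖ = 1 → star x ⬝ᵥ C.mulVec x ∈ sector α β)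
    {x : EuclideanSpace ℂ (Fin n)} (hx : x ≠ 0) :
    star x ⬝ᵥ C.mulVec x ∈ sector α β := by
  have hnorm : ‖x‖ ≠ 0 := norm_ne_zero_iff.2 hx
  have hnorm' : ((‖x‖ : ℝ) : ℂ) ≠ 0 := Complex.ofReal_ne_zero.2 hnorm
  set u : EuclideanSpace ℂ (Fin n) := ((‖x‖⁻¹ : ℝ) : ℂ) • x
  have hu : ‖u‖ = 1 := by
    simp [u, norm_smul, inv_mul_cancel₀ hnorm]
  have hquad : star x ⬝ᵥ C.mulVec x = ((‖x‖ ^ 2 : ℝ) : ℂ) * (star u ⬝ᵥ C.mulVec u) := by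
    change _ = _ * (star (((‖x‖⁻¹ : ℝ) : ℂ) • (x : Fin n → ℂ)) ⬝ᵥ
      C.mulVec (((‖x‖⁻¹ : ℝ) : ℂ) • (x : Fin n → ℂ)))
    rw [star_smul, mulVec_smul, smul_dotProduct, dotProduct_smul, smul_smul, smul_eq_mul,
      Complex.star_def, Complex.conj_ofReal]
    push_cast
    field_simp
  rw [hquad]
  exact ofReal_mul_mem_sector (by positivity) (hC u hu)

theorem det_one_add_mul_ne_zero_of_small_phases_general {n : ℕ} (α₁ β₁ α₂ β₂ : ℝ)
    (hsum : β₁ + β₂ < π) (hsum' : -π < α₁ + α₂)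
    (A B : Matrix (Fin n) (Fin n) ℂ)
    (hA : ∀ x : EuclideanSpace ℂ (Fin n), ‖x‖ = 1 → star x ⬝ᵥ A.mulVec x ∈ sector α₁ β₁)
    (hB : ∀ x : EuclideanSpace ℂ (Fin n), ‖x‖ = 1 → star x ⬝ᵥ B.mulVec x ∈ sector α₂ β₂) :
    (1 + A * B).det ≠ 0 := by
  intro hdet
  obtain ⟨x, hx, hABx⟩ := exists_mulVec_eq_zero_iff.2 hdet
  set y := B.mulVec x
  have hAy : A.mulVec y = -x := by
    have h : x + A.mulVec y = 0 := by simpa [y, add_mulVec, mulVec_mulVec] using hABx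
    exact eq_neg_of_add_eq_zero_right h
  have hy : y ≠ 0 := fun h => hx (by simpa [h] using hAy)
  set b := star x ⬝ᵥ B.mulVec x
  have hab : (star y ⬝ᵥ A.mulVec y) * b = ((-‖b‖ ^ 2 : ℝ) : ℂ) := by
    rw [hAy, dotProduct_neg, star_dotProduct, neg_mul, mul_comm, Complex.star_def,
      Complex.mul_conj']
    push_cast
    ring
  have hmem := mul_mem_sector (dotProduct_mulVec_mem_sector hA (x := WithLp.toLp 2 y) (by simpa))
    (dotProduct_mulVec_mem_sector hB (x := WithLp.toLp 2 x) (by simpa))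
  have hslit := sector_subset_slitPlane hsum' hsum (hab ▸ hmem)
  exact (Complex.ofReal_mem_slitPlane.1 hslit).not_ge (by simp only [neg_nonpos]; positivity)

/-- If the phases of `A` and `B` are both sufficiently small in magnitude, then
`I + A * B` is nonsingular. -/
theorem det_one_add_mul_ne_zero_of_small_phases {n : ℕ} (α₁ β₁ α₂ β₂ : ℝ)
    (h₁ : α₁ ≤ β₁) (h₂ : α₂ ≤ β₂) (hw₁ : β₁ - α₁ < π) (hw₂ : β₂ - α₂ < π)
    (hsum : β₁ + β₂ < π) (hsum' : -π < α₁ + α₂)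
    (A B : Matrix (Fin n) (Fin n) ℂ)
    (hA : ∀ x : EuclideanSpace ℂ (Fin n), ‖x‖ = 1 → star x ⬝ᵥ A.mulVec x ∈ sector α₁ β₁)
    (hB : ∀ x : EuclideanSpace ℂ (Fin n), ‖x‖ = 1 → star x ⬝ᵥ B.mulVec x ∈ sector α₂ β₂) :
    (1 + A * B).det ≠ 0 :=
  det_one_add_mul_ne_zero_of_small_phases_general α₁ β₁ α₂ β₂ hsum hsum' A B hA hB
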